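/- Interior lattice resolvent sum bound (key estimate in the proof of Lemma 5.2): There exists a constant C > 0 such that for every k_F ∈ (0,1] and every L ≥ 1/k_F, one has (1/L³) ∑_{k ∈ Λ*_L, |k| ≤ k_F − k_F^{3/2}} 1/(k_F² − |k|²) ≤ C k_F^{1/2}. (With ρ := k_F³ this is the bound C ρ^{1/6} used in the paper.) -/

import Mathlib

/-!
Interior lattice resolvent sum bound (key estimate in the proof of Lemma 5.2):
there is `C > 0` such that for every `k_F ∈ (0,1]` and every `L ≥ 1/k_F`,
`(1/L³) ∑_{k ∈ Λ*_L, |k| ≤ k_F − k_F^{3/2}} 1/(k_F² − |k|²) ≤ C k_F^{1/2}`,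
where `Λ*_L = (2π/L)ℤ³`.
-/

noncomputable section

open Real

abbrev E3 : Type := EuclideanSpace ℝ (Fin 3)

/-- The momentum lattice point `(2π/L)·n` of `Λ*_L`, for `n ∈ ℤ³`. -/
def momVec (L : ℝ) (n : Fin 3 → ℤ) : E3 :=
  ∑ j : Fin 3, (2 * π / L * (n j : ℝ)) • EuclideanSpace.single j (1 : ℝ)

/-- The Euclidean norm `|k|` of the lattice point `(2π/L)·n`. -/
def knorm (L : ℝ) (n : Fin 3 → ℤ) : ℝ := ‖momVec L n‖

/-
Every summand is at most `1 / (k_F · k_F^{3/2})`, because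
`k_F² - |k|² = (k_F - |k|)(k_F + |k|)` and `k_F - |k| ≥ k_F^{3/2}`. The summation range lies in
the cube `|n_i| ≤ k_F L` of `ℤ³`, which has at most `125 (k_F L)³` points once `k_F L ≥ 1`.
Hence the sum is at most `125 (k_F L)³ / k_F^{5/2} = 125 L³ k_F^{1/2}`.
-/

open Finset

def intCube (ι : Type*) [Fintype ι] [DecidableEq ι] (N : ℕ) : Finset (ι → ℤ) :=
  Fintype.piFinset fun _ => Icc (-N : ℤ) N

theorem card_intCube (ι : Type*) [Fintype ι] [DecidableEq ι] (N : ℕ) :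
    #(intCube ι N) = (2 * N + 1) ^ Fintype.card ι := by
  rw [intCube, Fintype.card_piFinset, prod_const, card_univ, Int.card_Icc]
  congr 1
  omega

theorem mem_intCube {ι : Type*} [Fintype ι] [DecidableEq ι] {N : ℕ} {n : ι → ℤ} :
    n ∈ intCube ι N ↔ ∀ i, |n i| ≤ N := by
  simp only [intCube, Fintype.mem_piFinset, mem_Icc, abs_le]

theorem momVec_apply (L : ℝ) (n : Fin 3 → ℤ) (i : Fin 3) :
    momVec L n i = 2 * π / L * n i := by
  simp [momVec, Pi.single_apply]

theorem abs_le_mul_of_knorm_le {L R : ℝ} (hL : 0 < L) {n : Fin 3 → ℤ} (h : knorm L n ≤ R)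
    (i : Fin 3) : |(n i : ℝ)| ≤ R * L := by
  have hcoord : 2 * π / L * |(n i : ℝ)| ≤ R := by
    have := PiLp.norm_apply_le (momVec L n) i
    rw [momVec_apply, Real.norm_eq_abs, abs_mul, abs_of_pos (by positivity)] at this
    exact this.trans h
  rw [div_mul_eq_mul_div, div_le_iff₀ hL] at hcoord
  nlinarith [abs_nonneg (n i : ℝ), pi_gt_three]

theorem mem_intCube_of_knorm_le {L R : ℝ} (hL : 0 < L) {n : Fin 3 → ℤ}
    (h : knorm L n ≤ R) : n ∈ intCube (Fin 3) ⌈R * L⌉₊ :=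
  mem_intCube.2 fun i => by
    exact_mod_cast (abs_le_mul_of_knorm_le hL h i).trans (Nat.le_ceil (R * L))

theorem card_intCube_natCeil_le (ι : Type*) [Fintype ι] [DecidableEq ι] {x : ℝ}
    (hx : 1 ≤ x) :
    (#(intCube ι ⌈x⌉₊) : ℝ) ≤ (5 * x) ^ Fintype.card ι := by
  rw [card_intCube]
  push_cast
  gcongr
  linarith [Nat.ceil_lt_add_one (zero_le_one.trans hx)]

theorem mul_le_sq_sub_sq_of_le_sub {k a x : ℝ} (hx : 0 ≤ x) (ha : 0 ≤ a) (h : x ≤ k - a) :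
    k * a ≤ k ^ 2 - x ^ 2 := by
  nlinarith

theorem tsum_ite_le_card_mul {α : Type*} {P : α → Prop} [DecidablePred P] {f : α → ℝ}
    {S : Finset α} {M : ℝ} (hS : ∀ n, P n → n ∈ S) (hf : ∀ n, P n → f n ≤ M)
    (hM : 0 ≤ M) :
    ∑' n, (if P n then f n else 0) ≤ #S * M := by
  rw [tsum_eq_sum (s := S) fun n hn => if_neg fun hP => hn (hS n hP), ← nsmul_eq_mul]
  refine sum_le_card_nsmul _ _ _ fun n _ => ?_
  split_ifs with hP
  exacts [hf n hP, hM]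

theorem pow_three_div_mul_rpow_three_halves {x : ℝ} (hx : 0 < x) :
    x ^ 3 / (x * x ^ ((3 : ℝ) / 2)) = x ^ ((1 : ℝ) / 2) := by
  rw [← rpow_one_add' hx.le (by norm_num), ← rpow_natCast, ← rpow_sub hx]
  norm_num

theorem interior_lattice_resolvent_sum_bound :
    ∃ C : ℝ, 0 < C ∧
      ∀ kF : ℝ, kF ∈ Set.Ioc (0 : ℝ) 1 → ∀ L : ℝ, 1 / kF ≤ L →
        (1 / L ^ 3) *
            ∑' n : Fin 3 → ℤ,
              (if knorm L n ≤ kF - kF ^ ((3 : ℝ) / 2) then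
                1 / (kF ^ 2 - knorm L n ^ 2)
              else 0)
          ≤ C * kF ^ ((1 : ℝ) / 2) := by
  refine ⟨125, by norm_num, ?_⟩
  rintro kF ⟨hkF, -⟩ L hL
  have hkFL : 1 ≤ kF * L := by rwa [div_le_iff₀ hkF, mul_comm] at hL
  have hLpos : 0 < L := pos_of_mul_pos_right (one_pos.trans_le hkFL) hkF.le
  set a := kF ^ ((3 : ℝ) / 2)
  have ha : 0 < a := rpow_pos_of_pos hkF _
  have hsum := tsum_ite_le_card_mul (f := fun n => 1 / (kF ^ 2 - knorm L n ^ 2))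
    (S := intCube (Fin 3) ⌈kF * L⌉₊) (M := 1 / (kF * a))
    (fun n h => mem_intCube_of_knorm_le hLpos (h.trans (sub_le_self _ ha.le)))
    (fun n h => one_div_le_one_div_of_le (by positivity)
      (mul_le_sq_sub_sq_of_le_sub (norm_nonneg _) ha.le h))
    (by positivity)
  have hcard := card_intCube_natCeil_le (Fin 3) hkFL
  rw [Fintype.card_fin] at hcard
  calc (1 / L ^ 3) * ∑' n : Fin 3 → ℤ, _
      ≤ 1 / L ^ 3 * ((5 * (kF * L)) ^ 3 * (1 / (kF * a))) := by
        gcongr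
        exact hsum.trans (by gcongr)
    _ = 125 * (kF ^ 3 / (kF * a)) := by field_simp; ring
    _ = 125 * kF ^ ((1 : ℝ) / 2) := by rw [pow_three_div_mul_rpow_three_halves hkF]
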